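/- arXiv:2401.08907 — 3 statements merged into one kernel-verified Lean document; each statement's English description precedes it below -/
import Mathlib

section
/- Let α be an element of the finite field F_{p^ℓ} (p prime, ℓ ≥ 1) whose multiplicative order does not divide p^i − 1 for any 1 ≤ i < ℓ. If α^{p^i + 1} = 1 for some 1 ≤ i < ℓ, then ℓ = 2i. -/
theorem stmt8 (p ℓ : ℕ) [Fact p.Prime] (hℓ : 1 ≤ ℓ)
    (α : GaloisField p ℓ)
    (hord : ∀ i, 1 ≤ i → i < ℓ → ¬ orderOf α ∣ p ^ i - 1)
    (i : ℕ) (hi1 : 1 ≤ i) (hiℓ : i < ℓ) (hpow : α ^ (p ^ i + 1) = 1) :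
    ℓ = 2 * i := by
  have hp : 1 < p := (Fact.out : p.Prime).one_lt
  have hα0 : α ≠ 0 := by
    intro h
    rw [h, zero_pow (by positivity)] at hpow
    exact zero_ne_one hpow
  set n := orderOf α with hn
  -- n divides p^ℓ - 1
  have : Fintype (GaloisField p ℓ) := Fintype.ofFinite _
  have hcard : Fintype.card (GaloisField p ℓ) = p ^ ℓ := by
    rw [← Nat.card_eq_fintype_card, GaloisField.card p ℓ (by omega)]
  have hdvdℓ : n ∣ p ^ ℓ - 1 := by
    rw [hn, orderOf_dvd_iff_pow_eq_one, ← hcard]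
    exact FiniteField.pow_card_sub_one_eq_one α hα0
  -- α ^ (p ^ i) = α⁻¹
  have hinv : α ^ (p ^ i) = α⁻¹ := by
    field_simp
    rw [← pow_succ]
    exact hpow
  -- n divides p ^ (2*i) - 1
  have h2i : α ^ (p ^ (2 * i)) = α := by
    rw [two_mul, pow_add, pow_mul, hinv, inv_pow, hinv, inv_inv]
  have hdvd2i : n ∣ p ^ (2 * i) - 1 := by
    rw [hn, orderOf_dvd_iff_pow_eq_one]
    have h1 : α ^ (p ^ (2 * i) - 1) * α = α ^ (p ^ (2 * i)) := by
      rw [← pow_succ, Nat.sub_add_cancel (Nat.one_le_two_pow.trans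
        (Nat.pow_le_pow_left (by omega) _) |>.trans (le_refl _))]
    have := h1.trans h2i
    calc α ^ (p ^ (2 * i) - 1) = α ^ (p ^ (2 * i) - 1) * α * α⁻¹ := by
          field_simp
      _ = 1 := by rw [this]; field_simp
  -- key: n ∣ p^m - 1 ↔ orderOf (p : ZMod n) ∣ m
  set e := orderOf ((p : ZMod n)) with he
  have key : ∀ m : ℕ, n ∣ p ^ m - 1 ↔ e ∣ m := by
    intro m
    have h1 : 1 ≤ p ^ m := Nat.one_le_pow _ _ (by omega)
    constructor
    · intro h
      rw [he, orderOf_dvd_iff_pow_eq_one]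
      have : ((p ^ m : ℕ) : ZMod n) = ((1 : ℕ) : ZMod n) :=
        (ZMod.natCast_eq_natCast_iff _ _ _).mpr
          ((Nat.modEq_iff_dvd' h1).mpr h).symm
      push_cast at this
      exact this
    · intro h
      rw [he, orderOf_dvd_iff_pow_eq_one] at h
      have : ((p ^ m : ℕ) : ZMod n) = ((1 : ℕ) : ZMod n) := by push_cast; exact h
      exact (Nat.modEq_iff_dvd' h1).mp ((ZMod.natCast_eq_natCast_iff _ _ _).mp this).symm
  have heℓ : e ∣ ℓ := (key ℓ).mp hdvdℓ
  have he2i : e ∣ 2 * i := (key (2 * i)).mp hdvd2i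
  have he1 : 1 ≤ e := by
    rcases Nat.eq_zero_or_pos e with h | h
    · rw [h] at heℓ; omega
    · exact h
  have heeq : e = ℓ := by
    by_contra hne
    have helt : e < ℓ := lt_of_le_of_ne (Nat.le_of_dvd (by omega) heℓ) hne
    exact hord e he1 helt ((key e).mpr dvd_rfl)
  rw [heeq] at he2i
  obtain ⟨k, hk⟩ := he2i
  rcases Nat.lt_or_ge k 2 with h | h
  · interval_cases k <;> omega
  · nlinarith
end

section
/- Let p be an odd prime and r an odd prime with p < r and p a primitive root modulo r. Let σ ∈ GL_{r−1}(p) be the companion matrix of f(X) = X^{r−1} + X^{r−2} + ⋯ + X + 1 and let φ ∈ GL_{r−1}(p) be the matrix with −1 on the antidiagonal and 0 elsewhere. Then ⟨σ, φ⟩ is isomorphic to the dihedral group of order 2r, i.e. σ has order r, φ has order 2, and φσφ⁻¹ = σ⁻¹. -/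
set_option maxHeartbeats 1000000 in
theorem stmt18 (p r : ℕ) (hp : p.Prime) (hr : r.Prime) (hpodd : Odd p) (hrodd : Odd r)
    (hpr : p < r)
    (hprim : ∃ u : (ZMod r)ˣ, (u : ZMod r) = (p : ZMod r) ∧
      ∀ v : (ZMod r)ˣ, v ∈ Subgroup.zpowers u)
    (σ φ : Matrix (Fin (r - 1)) (Fin (r - 1)) (ZMod p))
    (hσ : σ = Matrix.of fun (i j : Fin (r - 1)) =>
      if (j : ℕ) = r - 2 then -1 else if (i : ℕ) = (j : ℕ) + 1 then 1 else 0)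
    (hφ : φ = Matrix.of fun (i j : Fin (r - 1)) =>
      if (i : ℕ) + (j : ℕ) = r - 2 then -1 else 0) :
    orderOf σ = r ∧ orderOf φ = 2 ∧ φ * σ * φ⁻¹ = σ⁻¹ := by
  haveI hpf : Fact p.Prime := ⟨hp⟩
  haveI hrf : Fact r.Prime := ⟨hr⟩
  obtain ⟨a, ha⟩ := hpodd
  obtain ⟨b, hb⟩ := hrodd
  have hp2 : 2 ≤ p := hp.two_le
  have hr5 : 5 ≤ r := by omega
  have hσe : ∀ i j : Fin (r-1), σ i j =
      if (j:ℕ) = r-2 then -1 else if (i:ℕ) = (j:ℕ)+1 then 1 else 0 := by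
    intro i j; rw [hσ]; rfl
  have hφe : ∀ i j : Fin (r-1), φ i j = if (i:ℕ)+(j:ℕ) = r-2 then -1 else 0 := by
    intro i j; rw [hφ]; rfl
  -- left multiplication by σ
  have hL : ∀ (B : Matrix (Fin (r-1)) (Fin (r-1)) (ZMod p)) (i j : Fin (r-1)),
      (σ * B) i j = (if (i:ℕ) = 0 then 0 else B ⟨(i:ℕ)-1, by have := i.isLt; omega⟩ j)
        - B ⟨r-2, by omega⟩ j := by
    intro B i j
    have hi := i.isLt
    rw [Matrix.mul_apply]
    by_cases hi0 : (i:ℕ) = 0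
    · have hs : ∀ l : Fin (r-1), σ i l * B l j =
          if l = (⟨r-2, by omega⟩ : Fin (r-1)) then -(B l j) else 0 := by
        intro l
        have hl := l.isLt
        rw [hσe]
        simp only [Fin.ext_iff]
        split_ifs <;> first | (exfalso; omega) | ring
      rw [Finset.sum_congr rfl fun l _ => hs l, Finset.sum_ite_eq' Finset.univ,
        if_pos (Finset.mem_univ _), if_pos hi0]
      ring
    · have hs : ∀ l : Fin (r-1), σ i l * B l j =
          (if l = (⟨r-2, by omega⟩ : Fin (r-1)) then -(B l j) else 0)
          + (if l = (⟨(i:ℕ)-1, by omega⟩ : Fin (r-1)) then B l j else 0) := by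
        intro l
        have hl := l.isLt
        rw [hσe]
        simp only [Fin.ext_iff]
        split_ifs <;> first | (exfalso; omega) | ring
      rw [Finset.sum_congr rfl fun l _ => hs l, Finset.sum_add_distrib,
        Finset.sum_ite_eq' Finset.univ, Finset.sum_ite_eq' Finset.univ,
        if_pos (Finset.mem_univ _), if_pos (Finset.mem_univ _), if_neg hi0]
      ring
  -- powers of σ
  have hpow : ∀ k, k ≤ r → ∀ i j : Fin (r-1), (σ ^ k) i j =
      if (j:ℕ)+k < r-1 then (if (i:ℕ) = (j:ℕ)+k then 1 else 0)
      else if (j:ℕ)+k = r-1 then -1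
      else if (i:ℕ) + r = (j:ℕ)+k then 1 else 0 := by
    intro k
    induction k with
    | zero =>
      intro _ i j
      have hj := j.isLt
      have hi := i.isLt
      simp only [pow_zero, Matrix.one_apply, Fin.ext_iff, Nat.add_zero]
      split_ifs <;> first | (exfalso; omega) | rfl
    | succ k ih =>
      intro hk i j
      have hi := i.isLt; have hj := j.isLt
      rw [pow_succ', hL, ih (by omega), ih (by omega)]
      simp only []
      split_ifs <;> first | (exfalso; omega) | ring
  have hσr : σ ^ r = 1 := by
    ext i j
    have hi := i.isLt; have hj := j.isLt
    rw [hpow r le_rfl, Matrix.one_apply]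
    simp only [Fin.ext_iff]
    split_ifs <;> first | (exfalso; omega) | rfl
  have hσ1 : σ ≠ 1 := by
    intro h
    have h2 := congrFun (congrFun h ⟨1, by omega⟩) ⟨0, by omega⟩
    rw [hσe, Matrix.one_apply_ne (by simp [Fin.ext_iff])] at h2
    rw [if_neg (by simp; omega), if_pos (by simp)] at h2
    exact one_ne_zero h2
  -- φ lemmas
  have hφL : ∀ (B : Matrix (Fin (r-1)) (Fin (r-1)) (ZMod p)) (i j : Fin (r-1)),
      (φ * B) i j = -(B ⟨r-2-(i:ℕ), by omega⟩ j) := by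
    intro B i j
    have hi := i.isLt
    rw [Matrix.mul_apply]
    have hs : ∀ l : Fin (r-1), φ i l * B l j =
        if l = (⟨r-2-(i:ℕ), by omega⟩ : Fin (r-1)) then -(B l j) else 0 := by
      intro l
      have hl := l.isLt
      rw [hφe]
      simp only [Fin.ext_iff]
      split_ifs <;> first | (exfalso; omega) | ring
    rw [Finset.sum_congr rfl fun l _ => hs l, Finset.sum_ite_eq' Finset.univ,
      if_pos (Finset.mem_univ _)]
  have hφR : ∀ (B : Matrix (Fin (r-1)) (Fin (r-1)) (ZMod p)) (i j : Fin (r-1)),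
      (B * φ) i j = -(B i ⟨r-2-(j:ℕ), by omega⟩) := by
    intro B i j
    have hj := j.isLt
    rw [Matrix.mul_apply]
    have hs : ∀ l : Fin (r-1), B i l * φ l j =
        if l = (⟨r-2-(j:ℕ), by omega⟩ : Fin (r-1)) then -(B i l) else 0 := by
      intro l
      have hl := l.isLt
      rw [hφe]
      simp only [Fin.ext_iff]
      split_ifs <;> first | (exfalso; omega) | ring
    rw [Finset.sum_congr rfl fun l _ => hs l, Finset.sum_ite_eq' Finset.univ,
      if_pos (Finset.mem_univ _)]
  have hφ2 : φ * φ = 1 := by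
    ext i j
    have hi := i.isLt; have hj := j.isLt
    rw [hφL, hφe, Matrix.one_apply]
    simp only [Fin.ext_iff]
    split_ifs <;> first | (exfalso; omega) | ring
  have hφ1 : φ ≠ 1 := by
    intro h
    have h2 := congrFun (congrFun h ⟨0, by omega⟩) ⟨r-2, by omega⟩
    rw [hφe, Matrix.one_apply_ne (by simp [Fin.ext_iff]; omega)] at h2
    rw [if_pos (by simp)] at h2
    exact one_ne_zero (neg_eq_zero.mp h2)
  have hA : σ * (φ * σ * φ) = 1 := by
    ext i j
    have hi := i.isLt; have hj := j.isLt
    rw [hL]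
    simp only [hφR, hφL, hσe, neg_neg, Matrix.one_apply, Fin.ext_iff]
    split_ifs <;> first | (exfalso; omega) | ring
  have hinv : σ⁻¹ = φ * σ * φ := Matrix.inv_eq_right_inv hA
  have hφinv : φ⁻¹ = φ := Matrix.inv_eq_right_inv hφ2
  haveI : Fact (Nat.Prime 2) := ⟨Nat.prime_two⟩
  refine ⟨orderOf_eq_prime hσr hσ1, orderOf_eq_prime ?_ hφ1, ?_⟩
  · rw [pow_two]; exact hφ2
  · rw [hφinv, hinv]
end

section
/- Let p be a prime, r ≥ 3 with gcd(p, r) = 1, and suppose the dihedral group D_r of order 2r has a faithful irreducible representation on V = (F_p)^k. Then either k equals the multiplicative order ℓ of p modulo r, or k = 2ℓ where additionally ℓ ≤ φ(r)/2. In all cases k ≤ φ(r) ≤ r − 1. -/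
open Polynomial

section Helpers
variable {F V : Type*} [Field F] [AddCommGroup V] [Module F V]

lemma aux_conj_aeval (B A : Module.End F V) (hB : B * B = 1) (f : F[X]) :
    B * (aeval A f) * B = aeval (B * A * B) f := by
  let ψ : Module.End F V →ₐ[F] Module.End F V :=
    { toFun := fun x => B * x * B
      map_one' := by show B * 1 * B = 1; rw [mul_one, hB]
      map_mul' := by
        intro x y
        show B * (x * y) * B = B * x * B * (B * y * B)
        have h : B * x * B * (B * y * B) = B * x * (B * B) * y * B := by noncomm_ring
        rw [h, hB, mul_one]
        noncomm_ring
      map_zero' := by show B * 0 * B = 0; rw [mul_zero, zero_mul]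
      map_add' := by intro x y; show B * (x + y) * B = B * x * B + (B * y * B); noncomm_ring
      commutes' := by
        intro c
        show B * algebraMap F (Module.End F V) c * B = algebraMap F (Module.End F V) c
        rw [show B * algebraMap F (Module.End F V) c = algebraMap F (Module.End F V) c * B from
          (Algebra.commutes c B).symm, mul_assoc, hB, mul_one] }
  exact (Polynomial.aeval_algHom_apply ψ A f).symm

lemma aux_aeval_restrict (T : Module.End F V) (U : Submodule F V) (hU : ∀ v ∈ U, T v ∈ U)
    (q : F[X]) (w : U) :
    ((aeval (T.restrict hU) q) w : V) = aeval T q (w : V) := by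
  induction q using Polynomial.induction_on' with
  | add f g hf hg =>
      rw [map_add, LinearMap.add_apply, map_add, LinearMap.add_apply, Submodule.coe_add, hf, hg]
  | monomial n a =>
      rw [aeval_monomial, aeval_monomial, Module.End.mul_apply, Module.End.mul_apply,
        Module.algebraMap_end_apply, Module.algebraMap_end_apply, Submodule.coe_smul]
      congr 1
      rw [Module.End.pow_restrict, LinearMap.restrict_coe_apply]

lemma aux_aeval_comp_pow (A : Module.End F V) (n : ℕ) (f : F[X]) :
    aeval A (f.comp (X ^ n)) = aeval (A ^ n) f := by
  rw [Polynomial.aeval_comp, map_pow, aeval_X]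

lemma aux_aeval_mem (T : Module.End F V) (U : Submodule F V) (hU : ∀ v ∈ U, T v ∈ U)
    (g : F[X]) (v : V) (hv : v ∈ U) : aeval T g v ∈ U := by
  induction g using Polynomial.induction_on' with
  | add f g hf hg => rw [map_add, LinearMap.add_apply]; exact U.add_mem hf hg
  | monomial n a =>
      rw [aeval_monomial, Module.End.mul_apply, Module.algebraMap_end_apply]
      refine U.smul_mem a ?_
      induction n with
      | zero => simpa using hv
      | succ m ih =>
          rw [pow_succ', Module.End.mul_apply]
          exact hU _ ih

lemma aux_dim {F V' : Type*} [Field F] [AddCommGroup V'] [Module F V'] [FiniteDimensional F V']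
    (T : Module.End F V') (f : F[X]) (hmono : f.Monic) (hi : Irreducible f)
    (hT : Polynomial.aeval T f = 0) (v : V') (hv : v ≠ 0)
    (hcyc : ∀ w : V', ∃ g : F[X], Polynomial.aeval T g v = w) :
    Module.finrank F V' = f.natDegree := by
  haveI : Fact (Irreducible f) := ⟨hi⟩
  have haeval0 : ∀ g : F[X], aeval T (g * f) v = 0 := by
    intro g
    rw [map_mul, Module.End.mul_apply]
    have : (aeval T f) v = 0 := by rw [hT]; rfl
    rw [this, map_zero]
  let Lp : F[X] →ₗ[F] V' :=
    { toFun := fun g => aeval T g v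
      map_add' := by
        intro a b
        show aeval T (a + b) v = aeval T a v + aeval T b v
        rw [map_add]; rfl
      map_smul' := by
        intro c a
        show aeval T (c • a) v = c • aeval T a v
        rw [map_smul]; rfl }
  let L : AdjoinRoot f →ₗ[F] V' := Lp ∘ₗ AdjoinRoot.modByMonicHom hmono
  have hLmk : ∀ g : F[X], L (AdjoinRoot.mk f g) = aeval T g v := by
    intro g
    show Lp (AdjoinRoot.modByMonicHom hmono (AdjoinRoot.mk f g)) = aeval T g v
    rw [AdjoinRoot.modByMonicHom_mk]
    show aeval T (g %ₘ f) v = aeval T g v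
    conv_rhs => rw [← modByMonic_add_div g f]
    rw [map_add, LinearMap.add_apply, mul_comm, haeval0, add_zero]
  have hsurj : Function.Surjective L := by
    intro w
    obtain ⟨g, hg⟩ := hcyc w
    exact ⟨AdjoinRoot.mk f g, by rw [hLmk]; exact hg⟩
  have hinj : Function.Injective L := by
    rw [← LinearMap.ker_eq_bot]
    apply (Submodule.eq_bot_iff _).mpr
    intro x hx
    rw [LinearMap.mem_ker] at hx
    by_contra hx0
    obtain ⟨g, rfl⟩ := AdjoinRoot.mk_surjective x
    obtain ⟨h, hh⟩ := AdjoinRoot.mk_surjective (AdjoinRoot.mk f g)⁻¹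
    have hone : AdjoinRoot.mk f (g * h) = 1 := by
      rw [map_mul, hh, mul_inv_cancel₀ hx0]
    rw [← map_one (AdjoinRoot.mk f), AdjoinRoot.mk_eq_mk] at hone
    obtain ⟨q, hq⟩ := hone
    have hv0 : v = 0 := by
      have h1 : aeval T (1 : F[X]) v = v := by rw [map_one]; rfl
      have h2 : (1 : F[X]) = g * h - f * q := by rw [← hq]; ring
      rw [h2] at h1
      rw [map_sub, LinearMap.sub_apply] at h1
      rw [hLmk] at hx
      have h3 : aeval T (g * h) v = 0 := by
        rw [mul_comm, map_mul, Module.End.mul_apply, hx, map_zero]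
      have h4 : aeval T (f * q) v = 0 := by rw [mul_comm]; exact haeval0 q
      rw [h3, h4, sub_zero] at h1
      exact h1.symm
    exact hv hv0
  have heq := (LinearEquiv.ofBijective L ⟨hinj, hsurj⟩).finrank_eq
  rw [← heq, (AdjoinRoot.powerBasis hmono.ne_zero).finrank, AdjoinRoot.powerBasis_dim]


lemma aux_deg {p r : ℕ} [Fact p.Prime] (hp : p.Prime) (hr : 3 ≤ r) (hcop : Nat.Coprime p r)
    (f : (ZMod p)[X]) (hmono : f.Monic) (hi : Irreducible f)
    (hroot : orderOf (AdjoinRoot.root f) = r) :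
    f.natDegree = orderOf ((p : ZMod r)) := by
  haveI : NeZero r := ⟨by omega⟩
  haveI : Fact (Irreducible f) := ⟨hi⟩
  haveI : FiniteDimensional (ZMod p) (AdjoinRoot f) := (AdjoinRoot.powerBasis hmono.ne_zero).finite
  haveI : Finite (AdjoinRoot f) := Module.finite_of_finite (ZMod p)
  letI : Fintype (AdjoinRoot f) := Fintype.ofFinite _
  set K := AdjoinRoot f with hK
  set d := Module.finrank (ZMod p) K with hd
  have hdeg : f.natDegree = d := by
    rw [hd, (AdjoinRoot.powerBasis hmono.ne_zero).finrank, AdjoinRoot.powerBasis_dim]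
  set ℓ := orderOf ((p : ZMod r)) with hℓ
  have hup : ((ZMod.unitOfCoprime p hcop : (ZMod r)ˣ) : ZMod r) = (p : ZMod r) :=
    ZMod.coe_unitOfCoprime p hcop
  have hℓpos : 0 < ℓ := by
    rw [hℓ, ← hup, orderOf_units]; exact orderOf_pos _
  have hcard : Fintype.card K = p ^ d := by
    rw [Module.card_eq_pow_finrank (K := ZMod p) (V := K), ZMod.card]
  have hcardu : Fintype.card Kˣ = p ^ d - 1 := by rw [Fintype.card_units, hcard]
  have hdpos : 0 < d := Module.finrank_pos
  have hrpow : (AdjoinRoot.root f) ^ r = 1 := by rw [← hroot]; exact pow_orderOf_eq_one _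
  have hrm : r - 1 + 1 = r := by omega
  have hrunit : IsUnit (AdjoinRoot.root f) := by
    refine IsUnit.of_mul_eq_one ((AdjoinRoot.root f) ^ (r - 1)) ?_
    rw [← pow_succ', hrm, hrpow]
  have huord : orderOf hrunit.unit = r := by
    rw [← orderOf_units, hrunit.unit_spec, hroot]
  have h1 : r ∣ p ^ d - 1 := by
    rw [← hcardu, ← huord]; exact orderOf_dvd_card
  have hpd1 : 0 < p ^ d := pow_pos hp.pos d
  have hpl1 : 0 < p ^ ℓ := pow_pos hp.pos ℓ
  have hℓd : ℓ ∣ d := by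
    apply orderOf_dvd_of_pow_eq_one
    obtain ⟨t, ht⟩ := h1
    have hpd : p ^ d = r * t + 1 := by omega
    have : ((p : ZMod r)) ^ d = ((p ^ d : ℕ) : ZMod r) := by push_cast; ring
    rw [this, hpd]
    push_cast
    simp [ZMod.natCast_self]
  haveI : CharP (AdjoinRoot f) p := charP_of_injective_algebraMap (algebraMap (ZMod p) (AdjoinRoot f)).injective p
  have hrdvd : r ∣ p ^ ℓ - 1 := by
    have h2 : ((p : ZMod r)) ^ ℓ = 1 := pow_orderOf_eq_one _
    have h3 : ((p ^ ℓ - 1 : ℕ) : ZMod r) = 0 := by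
      rw [Nat.cast_sub hpl1]
      push_cast
      rw [h2]; ring
    exact (ZMod.natCast_eq_zero_iff _ _).mp h3
  have hfrob : ∀ x : K, x ^ (p ^ ℓ) = x := by
    obtain ⟨t, ht⟩ := hrdvd
    have hpl : p ^ ℓ = r * t + 1 := by omega
    have hcomm : ∀ (c : ZMod p) (x : K), (iterateFrobenius K p ℓ) (c • x)
        = c • (iterateFrobenius K p ℓ) x := by
      intro c x
      rw [Algebra.smul_def, map_mul, Algebra.smul_def]
      congr 1
      rw [iterateFrobenius_def, ← map_pow, ZMod.pow_card_pow]
    set ψ : K →ₐ[ZMod p] K := AlgHom.mk' (iterateFrobenius K p ℓ) hcomm with hψ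
    have hψdef : ∀ x : K, ψ x = x ^ (p ^ ℓ) := fun x => iterateFrobenius_def p ℓ x
    have hψroot : ψ (AdjoinRoot.root f) = AdjoinRoot.root f := by
      rw [hψdef, hpl, pow_succ, pow_mul, hrpow, one_pow, one_mul]
    intro x
    obtain ⟨g, rfl⟩ := AdjoinRoot.mk_surjective x
    rw [← AdjoinRoot.aeval_eq, ← hψdef, ← Polynomial.aeval_algHom_apply, hψroot]
  obtain ⟨g, hg⟩ := IsCyclic.exists_generator (α := Kˣ)
  have hgord : orderOf g = p ^ d - 1 := by
    rw [orderOf_eq_card_of_forall_mem_zpowers hg, Nat.card_eq_fintype_card, hcardu]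
  have hgpow : g ^ (p ^ ℓ) = g := by
    ext
    push_cast
    exact hfrob _
  have hg1 : g ^ (p ^ ℓ - 1) = 1 := by
    have h4 : g ^ (p ^ ℓ - 1) * g = g := by
      rw [← pow_succ]
      have : p ^ ℓ - 1 + 1 = p ^ ℓ := by omega
      rw [this, hgpow]
    exact mul_right_cancel (by rw [h4, one_mul])
  have hdvd2 : p ^ d - 1 ∣ p ^ ℓ - 1 := by
    rw [← hgord]; exact orderOf_dvd_of_pow_eq_one hg1
  have h2pl : 2 ≤ p ^ ℓ := by
    calc 2 ≤ p := hp.two_le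
    _ = p ^ 1 := (pow_one p).symm
    _ ≤ p ^ ℓ := Nat.pow_le_pow_right hp.pos hℓpos
  have hle : p ^ d - 1 ≤ p ^ ℓ - 1 := Nat.le_of_dvd (by omega) hdvd2
  have hdℓ : d ≤ ℓ := by
    have : p ^ d ≤ p ^ ℓ := by omega
    exact (Nat.pow_le_pow_iff_right hp.one_lt).mp this
  have hℓled : ℓ ≤ d := Nat.le_of_dvd hdpos hℓd
  omega

end Helpers

set_option maxHeartbeats 1000000 in
theorem stmt19 (p r k : ℕ) (hp : p.Prime) (hr : 3 ≤ r) (hcop : Nat.Coprime p r)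
    (ρ : DihedralGroup r →* ((Fin k → ZMod p) ≃ₗ[ZMod p] (Fin k → ZMod p)))
    (hfaith : Function.Injective ρ)
    (hirr : ∀ W : Submodule (ZMod p) (Fin k → ZMod p),
      (∀ g, ∀ v ∈ W, ρ g v ∈ W) → W = ⊥ ∨ W = ⊤) :
    (k = orderOf ((p : ZMod r)) ∨
      (k = 2 * orderOf ((p : ZMod r)) ∧ 2 * orderOf ((p : ZMod r)) ≤ Nat.totient r)) ∧
    k ≤ Nat.totient r ∧ Nat.totient r ≤ r - 1 := by
  classical
  haveI : Fact p.Prime := ⟨hp⟩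
  haveI : NeZero r := ⟨by omega⟩
  set F := ZMod p with hF
  set V := (Fin k → ZMod p) with hV
  set ℓ := orderOf ((p : ZMod r)) with hℓdef
  -- basic facts about ℓ and totient
  have hup : ((ZMod.unitOfCoprime p hcop : (ZMod r)ˣ) : ZMod r) = (p : ZMod r) :=
    ZMod.coe_unitOfCoprime p hcop
  have hℓunits : ℓ = orderOf (ZMod.unitOfCoprime p hcop) := by
    rw [hℓdef, ← hup, orderOf_units]
  have hℓpos : 0 < ℓ := by rw [hℓunits]; exact orderOf_pos _
  have hℓdvd : ℓ ∣ Nat.totient r := by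
    rw [hℓunits, ← ZMod.card_units_eq_totient r]
    exact orderOf_dvd_card
  have htotpos : 0 < Nat.totient r := Nat.totient_pos.mpr (by omega)
  have hℓle : ℓ ≤ Nat.totient r := Nat.le_of_dvd htotpos hℓdvd
  have htotlt : Nat.totient r < r := Nat.totient_lt r (by omega)
  -- k ≠ 0
  have hk0 : k ≠ 0 := by
    intro hk
    subst hk
    haveI : Subsingleton ((Fin 0 → ZMod p) ≃ₗ[ZMod p] (Fin 0 → ZMod p)) := by
      constructor
      intro a b
      ext x i
      exact i.elim0
    have heq : ρ (DihedralGroup.r 0) = ρ (DihedralGroup.sr 0) := Subsingleton.elim _ _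
    exact absurd (hfaith heq) (by intro h; cases h)
  haveI : NeZero k := ⟨hk0⟩
  haveI : Nontrivial V := by
    refine ⟨fun _ => 0, fun _ => 1, fun h => ?_⟩
    have := congrFun h ⟨0, by omega⟩
    simp at this
  -- representation into endomorphisms
  let ρu : DihedralGroup r →* (Module.End F V)ˣ :=
    ((LinearMap.GeneralLinearGroup.generalLinearEquiv F V).symm.toMonoidHom).comp ρ
  have hρu_inj : Function.Injective ρu := fun a b h =>
    hfaith ((LinearMap.GeneralLinearGroup.generalLinearEquiv F V).symm.injective h)
  set A' := ρu (DihedralGroup.r 1) with hA'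
  set B' := ρu (DihedralGroup.sr 0) with hB'
  set A : Module.End F V := (A' : Module.End F V) with hA
  set B : Module.End F V := (B' : Module.End F V) with hB
  have hA'r : A' ^ r = 1 := by
    rw [hA', ← map_pow, DihedralGroup.r_one_pow_n, map_one]
  have hApowr : A ^ r = 1 := by
    rw [hA, ← Units.val_pow_eq_pow_val, hA'r, Units.val_one]
  have hB'2 : B' * B' = 1 := by
    rw [hB', ← map_mul]
    have h1 : (DihedralGroup.sr 0 * DihedralGroup.sr 0 : DihedralGroup r) = 1 := by
      rw [DihedralGroup.sr_mul_sr, sub_zero, DihedralGroup.one_def]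
    rw [h1, map_one]
  have hB2 : B * B = 1 := by rw [hB, ← Units.val_mul, hB'2, Units.val_one]
  have hA'inv : B' * A' * B' = A' ^ (r - 1) := by
    have h1 : (DihedralGroup.sr 0 * DihedralGroup.r 1 * DihedralGroup.sr 0 : DihedralGroup r)
        = (DihedralGroup.r 1)⁻¹ := by
      rw [DihedralGroup.sr_mul_r, DihedralGroup.sr_mul_sr]
      apply eq_inv_of_mul_eq_one_left
      rw [DihedralGroup.r_mul_r, DihedralGroup.one_def]
      congr 1
      ring
    have h2 : A'⁻¹ = A' ^ (r - 1) := by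
      apply inv_eq_of_mul_eq_one_right
      have h3 : r - 1 + 1 = r := by omega
      rw [← pow_succ', h3, hA'r]
    rw [hA', hB', ← map_mul, ← map_mul, h1, map_inv, ← hA', h2]
  have hBAB : B * A * B = A ^ (r - 1) := by
    rw [hA, hB, ← Units.val_mul, ← Units.val_mul, hA'inv, Units.val_pow_eq_pow_val]
  have hordA : orderOf A = r := by
    rw [hA, orderOf_units, orderOf_injective ρu hρu_inj, DihedralGroup.orderOf_r_one]
  have hBB : ∀ v : V, B (B v) = v := fun v => by
    rw [← Module.End.mul_apply, hB2, Module.End.one_apply]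
  have hBinj : Function.Injective B := by
    intro x y hxy
    have h := congrArg B hxy
    rwa [hBB, hBB] at h
  -- invariance criterion
  have hApowmem : ∀ (U : Submodule F V), (∀ v ∈ U, A v ∈ U) →
      ∀ (n : ℕ) (w : V), w ∈ U → (A ^ n) w ∈ U := by
    intro U hUA n
    induction n with
    | zero => intro w hw; simpa using hw
    | succ m ih =>
        intro w hw
        rw [pow_succ, Module.End.mul_apply]
        exact ih _ (hUA _ hw)
  have hinv : ∀ U : Submodule F V, (∀ v ∈ U, A v ∈ U) → (∀ v ∈ U, B v ∈ U) →
      U = ⊥ ∨ U = ⊤ := by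
    intro U hUA hUB
    apply hirr
    intro g v hv
    have hρval : ∀ g : DihedralGroup r, ρ g v = ((ρu g : Module.End F V)) v := fun g => rfl
    rcases g with i | i
    · have hgi : (DihedralGroup.r i : DihedralGroup r) = (DihedralGroup.r 1) ^ (i.val) := by
        rw [DihedralGroup.r_one_pow]
        congr 1
        exact (ZMod.natCast_rightInverse i).symm
      rw [hρval, hgi, map_pow, Units.val_pow_eq_pow_val]
      exact hApowmem U hUA _ v hv
    · have hgi : (DihedralGroup.sr i : DihedralGroup r)
          = DihedralGroup.sr 0 * (DihedralGroup.r 1) ^ (i.val) := by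
        rw [DihedralGroup.r_one_pow, DihedralGroup.sr_mul_r]
        congr 1
        rw [zero_add]
        exact (ZMod.natCast_rightInverse i).symm
      rw [hρval, hgi, map_mul, map_pow, Units.val_mul, Units.val_pow_eq_pow_val,
        Module.End.mul_apply]
      exact hUB _ (hApowmem U hUA _ v hv)
  -- minimal polynomial of A
  have hXr_monic : (X ^ r - 1 : F[X]).Monic := by
    have h := Polynomial.monic_X_pow_sub_C (1 : F) (show r ≠ 0 by omega)
    simpa using h
  have hXr_aeval : aeval A (X ^ r - 1 : F[X]) = 0 := by
    rw [map_sub, map_pow, aeval_X, map_one, hApowr, sub_self]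
  have hinteg : IsIntegral F A := ⟨X ^ r - 1, hXr_monic, by
    rw [← Polynomial.aeval_def]; exact hXr_aeval⟩
  set m := minpoly F A with hm
  have hm_monic : m.Monic := minpoly.monic hinteg
  have hm_ne : m ≠ 0 := hm_monic.ne_zero
  have hm0 : aeval A m = 0 := by rw [hm]; exact minpoly.aeval F A
  have hm_dvdXr : m ∣ X ^ r - 1 := by rw [hm]; exact minpoly.dvd F A hXr_aeval
  have hrp : (r : F) ≠ 0 := by
    show (r : ZMod p) ≠ 0
    rw [Ne, ZMod.natCast_eq_zero_iff]
    exact hp.coprime_iff_not_dvd.mp hcop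
  have hm_deg : 0 < m.natDegree := by rw [hm]; exact minpoly.natDegree_pos hinteg
  obtain ⟨f0, hf0_irr, hf0_dvd⟩ := WfDvdMonoid.exists_irreducible_factor
    (Polynomial.not_isUnit_of_natDegree_pos m hm_deg) hm_ne
  set f := normalize f0 with hf
  have hf_monic : f.Monic := Polynomial.monic_normalize hf0_irr.ne_zero
  have hf_irr : Irreducible f := (normalize_associated f0).symm.irreducible hf0_irr
  have hf_dvd : f ∣ m := normalize_dvd_iff.mpr hf0_dvd
  have hf_degpos : 0 < f.natDegree := hf_irr.natDegree_pos
  have hAcomm : ∀ q : F[X], A * aeval A q = aeval A q * A := by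
    intro q
    have h1 : A * aeval A q = aeval A (X * q) := by rw [map_mul, aeval_X]
    have h2 : aeval A q * A = aeval A (q * X) := by rw [map_mul, aeval_X]
    rw [h1, h2, mul_comm X q]
  set Cf := aeval A f with hCf
  set W := LinearMap.ker Cf with hWdef
  have hWA : ∀ v ∈ W, A v ∈ W := by
    intro v hv
    rw [hWdef, LinearMap.mem_ker] at hv ⊢
    have h : Cf (A v) = A (Cf v) := by
      rw [← Module.End.mul_apply, hCf, ← hAcomm f, Module.End.mul_apply]
    rw [h, hv, map_zero]
  have hW_ne : W ≠ ⊥ := by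
    intro hbot
    have hinj2 : Function.Injective Cf := by
      rw [← LinearMap.ker_eq_bot]; exact hbot
    obtain ⟨q, hq⟩ := hf_dvd
    have h0 : aeval A m = 0 := hm0
    rw [hq, map_mul] at h0
    have hq0 : aeval A q = 0 := by
      apply LinearMap.ext
      intro v
      apply hinj2
      rw [← Module.End.mul_apply]
      rw [← hCf] at h0
      rw [h0, LinearMap.zero_apply, map_zero]
    have hmq : m ∣ q := by rw [hm]; exact minpoly.dvd F A hq0
    have hq_ne : q ≠ 0 := by
      rintro rfl
      rw [mul_zero] at hq
      exact hm_ne hq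
    have h1 := Polynomial.natDegree_le_of_dvd hmq hq_ne
    have h2 : m.natDegree = f.natDegree + q.natDegree := by
      rw [hq, Polynomial.natDegree_mul hf_monic.ne_zero hq_ne]
    omega
  set BW := W.map B with hBWdef
  have hmemBW : ∀ v, v ∈ BW ↔ B v ∈ W := by
    intro v
    constructor
    · rintro ⟨w, hw, rfl⟩; rwa [hBB]
    · intro h; exact ⟨B v, h, hBB v⟩
  have hBmulA : B * A = A ^ (r - 1) * B := by
    calc B * A = B * A * (B * B) := by rw [hB2, mul_one]
    _ = (B * A * B) * B := by noncomm_ring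
    _ = A ^ (r - 1) * B := by rw [hBAB]
  have hBWA : ∀ v ∈ BW, A v ∈ BW := by
    intro v hv
    rw [hmemBW] at hv ⊢
    have h1 : B (A v) = ((A ^ (r - 1)) * B) v := by rw [← hBmulA]; rfl
    rw [h1, Module.End.mul_apply]
    exact hApowmem W hWA _ _ hv
  -- orbit submodules
  let Orb : V → Submodule F V := fun v =>
    { carrier := Set.range (fun g : F[X] => aeval A g v)
      add_mem' := by
        rintro _ _ ⟨g1, rfl⟩ ⟨g2, rfl⟩
        exact ⟨g1 + g2, by show aeval A (g1 + g2) v = _; rw [map_add]; rfl⟩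
      zero_mem' := ⟨0, by show aeval A (0 : F[X]) v = 0; rw [map_zero]; rfl⟩
      smul_mem' := by
        rintro c _ ⟨g, rfl⟩
        exact ⟨c • g, by show aeval A (c • g) v = _; rw [map_smul]; rfl⟩ }
  have hOrbmem : ∀ (v x : V), x ∈ Orb v ↔ ∃ g : F[X], aeval A g v = x := fun v x => Iff.rfl
  have hOrbself : ∀ v, v ∈ Orb v :=
    fun v => ⟨1, by show aeval A (1 : F[X]) v = v; rw [map_one]; rfl⟩
  have hOrbA : ∀ v, ∀ x ∈ Orb v, A x ∈ Orb v := by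
    rintro v x ⟨g, rfl⟩
    exact ⟨X * g, by show aeval A (X * g) v = _; rw [map_mul, aeval_X]; rfl⟩
  have hBaeval : ∀ (g : F[X]) (x : V),
      B ((aeval A g) x) = aeval A (g.comp (X ^ (r - 1))) (B x) := by
    intro g x
    have h2 : B * aeval A g * B = aeval A (g.comp (X ^ (r - 1))) := by
      rw [aux_conj_aeval B A hB2 g, hBAB, ← aux_aeval_comp_pow]
    have h3 : B * aeval A g = aeval A (g.comp (X ^ (r - 1))) * B := by
      calc B * aeval A g = B * aeval A g * (B * B) := by rw [hB2, mul_one]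
      _ = (B * aeval A g * B) * B := by noncomm_ring
      _ = aeval A (g.comp (X ^ (r - 1))) * B := by rw [h2]
    calc B ((aeval A g) x) = (B * aeval A g) x := rfl
    _ = (aeval A (g.comp (X ^ (r - 1))) * B) x := by rw [h3]
    _ = aeval A (g.comp (X ^ (r - 1))) (B x) := rfl
  have hOrbB : ∀ v, B v ∈ Orb v → ∀ x ∈ Orb v, B x ∈ Orb v := by
    rintro v hBv x ⟨g, rfl⟩
    obtain ⟨h, hh⟩ := hBv
    rw [hBaeval, ← hh, ← Module.End.mul_apply, ← map_mul]
    exact ⟨g.comp (X ^ (r - 1)) * h, rfl⟩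
  have hfinrankV : Module.finrank F V = k := by
    show Module.finrank (ZMod p) (Fin k → ZMod p) = k
    exact Module.finrank_fin_fun (ZMod p)
  -- the invariant subspace W ⊓ BW
  have hW2A : ∀ v ∈ W ⊓ BW, A v ∈ W ⊓ BW := fun v hv => ⟨hWA v hv.1, hBWA v hv.2⟩
  have hW2B : ∀ v ∈ W ⊓ BW, B v ∈ W ⊓ BW := by
    intro v hv
    have h1 : B v ∈ W := (hmemBW v).mp hv.2
    have h2 : B v ∈ BW := (hmemBW (B v)).mpr (by rw [hBB]; exact hv.1)
    exact ⟨h1, h2⟩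
  rcases hinv (W ⊓ BW) hW2A hW2B with hbot | htop
  · -- case k = 2ℓ
    have hBWB : ∀ v ∈ BW, B v ∈ W := fun v hv => (hmemBW v).mp hv
    have hsupA : ∀ v ∈ W ⊔ BW, A v ∈ W ⊔ BW := by
      intro v hv
      rcases Submodule.mem_sup.mp hv with ⟨x, hx, y, hy, rfl⟩
      rw [map_add]
      exact Submodule.add_mem_sup (hWA x hx) (hBWA y hy)
    have hsupB : ∀ v ∈ W ⊔ BW, B v ∈ W ⊔ BW := by
      intro v hv
      rcases Submodule.mem_sup.mp hv with ⟨x, hx, y, hy, rfl⟩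
      rw [map_add]
      apply Submodule.add_mem
      · exact Submodule.mem_sup_right ((hmemBW (B x)).mpr (by rw [hBB]; exact hx))
      · exact Submodule.mem_sup_left (hBWB y hy)
    have hsuptop : W ⊔ BW = ⊤ := by
      rcases hinv (W ⊔ BW) hsupA hsupB with h | h
      · exact absurd (eq_bot_iff.mpr (le_sup_left.trans h.le)) hW_ne
      · exact h
    have hfinBW : Module.finrank F BW = Module.finrank F W :=
      (Submodule.equivMapOfInjective B hBinj W).finrank_eq.symm
    have hsum : k = Module.finrank F W + Module.finrank F BW := by
      have h := Submodule.finrank_sup_add_finrank_inf_eq W BW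
      rw [hsuptop, hbot, finrank_top, finrank_bot, add_zero, hfinrankV] at h
      exact h
    set AW := A.restrict hWA with hAWdef
    have hAWf : aeval AW f = 0 := by
      apply LinearMap.ext
      intro w
      have h := aux_aeval_restrict A W hWA f w
      have h2 : Cf (w : V) = 0 := LinearMap.mem_ker.mp w.2
      apply Subtype.ext
      rw [h, ← hCf, h2]
      simp
    obtain ⟨v, hvW, hvne⟩ := (Submodule.ne_bot_iff W).mp hW_ne
    have hOrbW : Orb v ≤ W := by
      rintro x ⟨g, rfl⟩
      exact aux_aeval_mem A W hWA g v hvW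
    have hABmul : A * B = B * A ^ (r - 1) := by
      calc A * B = (B * B) * (A * B) := by rw [hB2, one_mul]
      _ = B * (B * A * B) := by noncomm_ring
      _ = B * A ^ (r - 1) := by rw [hBAB]
    have hOBA : ∀ x ∈ Orb v ⊔ (Orb v).map B, A x ∈ Orb v ⊔ (Orb v).map B := by
      intro x hx
      rcases Submodule.mem_sup.mp hx with ⟨a, ha, b, hb, rfl⟩
      rw [map_add]
      apply Submodule.add_mem
      · exact Submodule.mem_sup_left (hOrbA v a ha)
      · rcases hb with ⟨u, hu, rfl⟩
        have h1 : A (B u) = B ((A ^ (r - 1)) u) := by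
          rw [← Module.End.mul_apply, hABmul]; rfl
        rw [h1]
        exact Submodule.mem_sup_right ⟨(A ^ (r - 1)) u,
          hApowmem (Orb v) (hOrbA v) (r - 1) u hu, rfl⟩
    have hOBB : ∀ x ∈ Orb v ⊔ (Orb v).map B, B x ∈ Orb v ⊔ (Orb v).map B := by
      intro x hx
      rcases Submodule.mem_sup.mp hx with ⟨a, ha, b, hb, rfl⟩
      rw [map_add]
      apply Submodule.add_mem
      · exact Submodule.mem_sup_right ⟨a, ha, rfl⟩
      · rcases hb with ⟨u, hu, rfl⟩
        rw [hBB]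
        exact Submodule.mem_sup_left hu
    have hOBtop : Orb v ⊔ (Orb v).map B = ⊤ := by
      rcases hinv _ hOBA hOBB with h | h
      · exfalso
        have hmem := Submodule.mem_sup_left (hOrbself v) (T := (Orb v).map B)
        rw [h] at hmem
        exact hvne (by simpa using hmem)
      · exact h
    have hcycW : ∀ w : V, w ∈ W → ∃ g : F[X], aeval A g v = w := by
      intro w hw
      have hw2 : w ∈ Orb v ⊔ (Orb v).map B := hOBtop ▸ Submodule.mem_top
      rcases Submodule.mem_sup.mp hw2 with ⟨x, hx, y, hy, rfl⟩
      have hyBW : y ∈ BW := by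
        rcases hy with ⟨u, hu, rfl⟩
        exact ⟨u, hOrbW hu, rfl⟩
      have hyW : y ∈ W := by
        have h : y = (x + y) - x := by abel
        rw [h]
        exact W.sub_mem hw (hOrbW hx)
      have hy0 : y = 0 := by
        have h : y ∈ W ⊓ BW := ⟨hyW, hyBW⟩
        rw [hbot] at h
        simpa using h
      rcases hx with ⟨g, rfl⟩
      exact ⟨g, by rw [hy0, add_zero]⟩
    have hvW' : (⟨v, hvW⟩ : W) ≠ 0 := by
      intro h
      exact hvne (congrArg Subtype.val h)
    have hcycW' : ∀ w : ↥W, ∃ g : F[X], aeval AW g ⟨v, hvW⟩ = w := by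
      intro w
      obtain ⟨g, hg⟩ := hcycW w w.2
      refine ⟨g, Subtype.ext ?_⟩
      rw [hAWdef, aux_aeval_restrict A W hWA g ⟨v, hvW⟩]
      exact hg
    have hdimW : Module.finrank F ↥W = f.natDegree :=
      aux_dim AW f hf_monic hf_irr hAWf ⟨v, hvW⟩ hvW' hcycW'
    have hk2 : k = 2 * f.natDegree := by omega
    have hf_dvdXr : f ∣ X ^ r - 1 := dvd_trans hf_dvd hm_dvdXr
    have hrootr : (AdjoinRoot.root f) ^ r = 1 := by
      have h := (AdjoinRoot.mk_eq_zero).mpr hf_dvdXr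
      rwa [map_sub, map_pow, AdjoinRoot.mk_X, map_one, sub_eq_zero] at h
    have hroot : orderOf (AdjoinRoot.root f) = r := by
      have hdvd1 : orderOf (AdjoinRoot.root f) ∣ r := orderOf_dvd_of_pow_eq_one hrootr
      have hdvd2 : r ∣ orderOf (AdjoinRoot.root f) := by
        set d := orderOf (AdjoinRoot.root f) with hd
        have hfdvd : f ∣ X ^ d - 1 := by
          rw [← AdjoinRoot.mk_eq_zero, map_sub, map_pow, AdjoinRoot.mk_X, map_one, sub_eq_zero]
          exact pow_orderOf_eq_one _
        obtain ⟨q, hq⟩ := hfdvd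
        have hWfix : ∀ w ∈ W, (A ^ d) w = w := by
          intro w hw
          rw [hWdef, LinearMap.mem_ker] at hw
          have hw' : (aeval A f) w = 0 := hw
          have h : aeval A (X ^ d - 1 : F[X]) w = 0 := by
            rw [hq, mul_comm, map_mul, Module.End.mul_apply, hw', map_zero]
          rw [map_sub, map_pow, aeval_X, map_one, LinearMap.sub_apply,
            Module.End.one_apply] at h
          exact sub_eq_zero.mp h
        have hA1 : A ^ d = 1 := by
          have hkey : B * (A ^ d) * B = (A ^ d) ^ (r - 1) := by
            have h7 : aeval A ((X : F[X]) ^ d) = A ^ d := by rw [map_pow, aeval_X]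
            have h8 := aux_conj_aeval B A hB2 ((X : F[X]) ^ d)
            rw [h7, hBAB, map_pow, aeval_X] at h8
            rw [h8, ← pow_mul, ← pow_mul, mul_comm]
          apply LinearMap.ext
          intro x
          have hx : x ∈ W ⊔ BW := hsuptop ▸ Submodule.mem_top
          rcases Submodule.mem_sup.mp hx with ⟨a, ha, b, hb, rfl⟩
          rcases hb with ⟨u, hu, rfl⟩
          rw [map_add, Module.End.one_apply]
          congr 1
          · exact hWfix a ha
          · have h5 : A ^ d * B = B * ((A ^ d) ^ (r - 1)) := by
              calc A ^ d * B = (B * B) * (A ^ d * B) := by rw [hB2, one_mul]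
              _ = B * (B * (A ^ d) * B) := by noncomm_ring
              _ = B * ((A ^ d) ^ (r - 1)) := by rw [hkey]
            have h6 : ∀ n : ℕ, ((A ^ d) ^ n) u = u := by
              intro n
              induction n with
              | zero => simp
              | succ i ih =>
                  rw [pow_succ', Module.End.mul_apply, ih]
                  exact hWfix u hu
            calc (A ^ d) (B u) = (A ^ d * B) u := rfl
            _ = (B * ((A ^ d) ^ (r - 1))) u := by rw [h5]
            _ = B (((A ^ d) ^ (r - 1)) u) := rfl
            _ = B u := by rw [h6]
        rw [← hordA]
        exact orderOf_dvd_of_pow_eq_one hA1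
      exact Nat.dvd_antisymm hdvd1 hdvd2
    have hdeg := aux_deg hp hr hcop f hf_monic hf_irr hroot
    have hnotmem : (-1 : (ZMod r)ˣ) ∉ Subgroup.zpowers (ZMod.unitOfCoprime p hcop) := by
      intro hmem
      obtain ⟨j, hj⟩ := mem_powers_iff_mem_zpowers.mpr hmem
      have hcast : ((p : ZMod r)) ^ j = (-1 : ZMod r) := by
        have h := congrArg (Units.val) hj
        rw [Units.val_pow_eq_pow_val, hup] at h
        rw [h, Units.val_neg, Units.val_one]
      have hr1 : ((p ^ j + 1 : ℕ) : ZMod r) = 0 := by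
        push_cast
        rw [hcast]
        ring
      have hrdvd2 : r ∣ p ^ j + 1 := (ZMod.natCast_eq_zero_iff _ _).mp hr1
      obtain ⟨t, ht⟩ := hrdvd2
      haveI : Fact (Irreducible f) := ⟨hf_irr⟩
      haveI : CharP (AdjoinRoot f) p :=
        charP_of_injective_algebraMap (algebraMap (ZMod p) (AdjoinRoot f)).injective p
      have hζne : (AdjoinRoot.root f) ≠ 0 := by
        intro h
        rw [h, zero_pow (show r ≠ 0 by omega)] at hrootr
        exact zero_ne_one hrootr
      have hfrobζ : aeval ((AdjoinRoot.root f) ^ (p ^ j)) f = 0 := by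
        have hcomm : ∀ (c : ZMod p) (x : AdjoinRoot f), (iterateFrobenius (AdjoinRoot f) p j) (c • x)
            = c • (iterateFrobenius (AdjoinRoot f) p j) x := by
          intro c x
          rw [Algebra.smul_def, map_mul, Algebra.smul_def]
          congr 1
          rw [iterateFrobenius_def, ← map_pow, ZMod.pow_card_pow]
        set ψ : AdjoinRoot f →ₐ[ZMod p] AdjoinRoot f :=
          AlgHom.mk' (iterateFrobenius (AdjoinRoot f) p j) hcomm with hψ
        have h1 : aeval (ψ (AdjoinRoot.root f)) f = ψ (aeval (AdjoinRoot.root f) f) :=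
          Polynomial.aeval_algHom_apply ψ (AdjoinRoot.root f) f
        have h2 : aeval (AdjoinRoot.root f) f = 0 := by
          rw [AdjoinRoot.aeval_eq, AdjoinRoot.mk_self]
        have h3 : ψ (AdjoinRoot.root f) = (AdjoinRoot.root f) ^ (p ^ j) :=
          iterateFrobenius_def p j _
        rw [← h3, h1, h2, map_zero]
      have hpow_eq : (AdjoinRoot.root f) ^ (p ^ j) = (AdjoinRoot.root f) ^ (r - 1) := by
        have h1 : (AdjoinRoot.root f) ^ (p ^ j) * (AdjoinRoot.root f) = 1 := by
          rw [← pow_succ, show p ^ j + 1 = r * t from ht, pow_mul, hrootr, one_pow]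
        have h2 : (AdjoinRoot.root f) ^ (r - 1) * (AdjoinRoot.root f) = 1 := by
          rw [← pow_succ, show r - 1 + 1 = r by omega, hrootr]
        exact mul_right_cancel₀ hζne (h1.trans h2.symm)
      have hfζ : aeval ((AdjoinRoot.root f) ^ (r - 1)) f = 0 := by
        rw [← hpow_eq]; exact hfrobζ
      have hminp : minpoly (ZMod p) (AdjoinRoot.root f) = f := by
        rw [AdjoinRoot.minpoly_root hf_monic.ne_zero, hf_monic.leadingCoeff, inv_one,
          map_one, mul_one]
      have hfdvdcomp : f ∣ f.comp (X ^ (r - 1)) := by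
        have hdvd := minpoly.dvd (ZMod p) (AdjoinRoot.root f)
          (p := f.comp (X ^ (r - 1)))
          (by rw [Polynomial.aeval_comp, map_pow, aeval_X]; exact hfζ)
        rwa [hminp] at hdvd
      obtain ⟨q, hq⟩ := hfdvdcomp
      have hWle : W ≤ BW := by
        intro w hw
        rw [hWdef, LinearMap.mem_ker] at hw
        rw [hmemBW, hWdef, LinearMap.mem_ker]
        have hBCfB : B * Cf * B = Cf * aeval A q := by
          rw [hCf, aux_conj_aeval B A hB2 f, hBAB, ← aux_aeval_comp_pow, hq, map_mul]
        have h1 : B (Cf (B w)) = (B * Cf * B) w := rfl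
        have h2 : (Cf * aeval A q) w = 0 := by
          have hcomm2 : Cf * aeval A q = aeval A q * Cf := by
            rw [hCf, ← map_mul, ← map_mul, mul_comm]
          rw [hcomm2, Module.End.mul_apply, hw, map_zero]
        have h3 : B (Cf (B w)) = 0 := by rw [h1, hBCfB, h2]
        have h4 : B (Cf (B w)) = B 0 := by rw [h3, map_zero]
        exact hBinj h4
      have hWbot : W = ⊥ := by
        rw [eq_bot_iff, ← hbot]
        exact le_inf le_rfl hWle
      exact hW_ne hWbot
    have h2ℓ : 2 * ℓ ≤ Nat.totient r := by
      set u := ZMod.unitOfCoprime p hcop with hu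
      set S : Set (ZMod r)ˣ := ((Subgroup.zpowers u : Subgroup (ZMod r)ˣ) : Set (ZMod r)ˣ) with hS
      set T : Set (ZMod r)ˣ := (fun x => (-1) * x) '' S with hT
      have hST : Disjoint S T := by
        rw [Set.disjoint_left]
        rintro x hxS ⟨y, hyS, rfl⟩
        apply hnotmem
        have hxS' : (-1) * y ∈ Subgroup.zpowers u := hxS
        have hyS' : y ∈ Subgroup.zpowers u := hyS
        have h : (-1 : (ZMod r)ˣ) = ((-1) * y) * y⁻¹ := by group
        rw [h]
        exact Subgroup.mul_mem _ hxS' (Subgroup.inv_mem _ hyS')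
      have hcardS : S.ncard = ℓ := by
        rw [hS, ← Nat.card_coe_set_eq]
        have h := Nat.card_zpowers u
        rw [← hℓunits] at h
        exact h
      have hcardT : T.ncard = ℓ := by
        rw [hT, Set.ncard_image_of_injective S (mul_right_injective (-1)), hcardS]
      have hunion : (S ∪ T).ncard = 2 * ℓ := by
        rw [Set.ncard_union_eq hST (Set.toFinite S) (Set.toFinite T), hcardS, hcardT]
        ring
      have hle2 : (S ∪ T).ncard ≤ Nat.card (ZMod r)ˣ := by
        rw [← Set.ncard_univ]
        exact Set.ncard_le_ncard (Set.subset_univ _) (Set.toFinite _)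
      rw [hunion, Nat.card_eq_fintype_card, ZMod.card_units_eq_totient] at hle2
      exact hle2
    refine ⟨Or.inr ⟨by omega, h2ℓ⟩, by omega, by omega⟩
  · -- case k = ℓ : W = ⊤, m = f irreducible
    have hWtop : W = ⊤ := by
      rw [eq_top_iff]
      calc (⊤ : Submodule F V) = W ⊓ BW := htop.symm
      _ ≤ W := inf_le_left
    have hCf0 : Cf = 0 := LinearMap.ker_eq_top.mp (by rw [← hWdef]; exact hWtop)
    have hmf : m = f := by
      have h1 : m ∣ f := by rw [hm]; exact minpoly.dvd F A (by rw [← hCf]; exact hCf0)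
      exact Polynomial.eq_of_monic_of_associated hm_monic hf_monic
        (associated_of_dvd_dvd h1 hf_dvd)
    have hm_irr : Irreducible m := by rw [hmf]; exact hf_irr
    obtain ⟨v0, hv0⟩ := exists_ne (0 : V)
    have hcyc : ∃ v : V, v ≠ 0 ∧ ∀ w, ∃ g : F[X], aeval A g v = w := by
      by_cases hB0 : B v0 ∈ Orb v0
      · rcases hinv (Orb v0) (hOrbA v0) (hOrbB v0 hB0) with hbot2 | htop2
        · exfalso
          have h := hOrbself v0
          rw [hbot2] at h
          exact hv0 (by simpa using h)
        · exact ⟨v0, hv0, fun w => (hOrbmem v0 w).mp (htop2 ▸ Submodule.mem_top)⟩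
      · have hw0Bfix : B (v0 + B v0) = v0 + B v0 := by
          rw [map_add, hBB, add_comm]
        have hw0ne : v0 + B v0 ≠ 0 := by
          intro h
          apply hB0
          have h2 : B v0 = -v0 := eq_neg_of_add_eq_zero_right h
          rw [h2]
          exact (Orb v0).neg_mem (hOrbself v0)
        have hBw0 : B (v0 + B v0) ∈ Orb (v0 + B v0) := by
          rw [hw0Bfix]; exact hOrbself _
        rcases hinv (Orb (v0 + B v0)) (hOrbA _) (hOrbB _ hBw0) with hbot2 | htop2
        · exfalso
          have h := hOrbself (v0 + B v0)
          rw [hbot2] at h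
          exact hw0ne (by simpa using h)
        · exact ⟨v0 + B v0, hw0ne, fun w => (hOrbmem _ w).mp (htop2 ▸ Submodule.mem_top)⟩
    obtain ⟨v, hvne, hvcyc⟩ := hcyc
    have hkm : k = m.natDegree := by
      rw [← hfinrankV]
      exact aux_dim A m hm_monic hm_irr hm0 v hvne hvcyc
    have hroot : orderOf (AdjoinRoot.root m) = r := by
      have hrootr : (AdjoinRoot.root m) ^ r = 1 := by
        have h := (AdjoinRoot.mk_eq_zero).mpr hm_dvdXr
        rwa [map_sub, map_pow, AdjoinRoot.mk_X, map_one, sub_eq_zero] at h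
      have hdvd1 : orderOf (AdjoinRoot.root m) ∣ r := orderOf_dvd_of_pow_eq_one hrootr
      have hdvd2 : r ∣ orderOf (AdjoinRoot.root m) := by
        have hpow1 : (AdjoinRoot.root m) ^ (orderOf (AdjoinRoot.root m)) = 1 :=
          pow_orderOf_eq_one _
        have hmdvd : m ∣ X ^ (orderOf (AdjoinRoot.root m)) - 1 := by
          rw [← AdjoinRoot.mk_eq_zero, map_sub, map_pow, AdjoinRoot.mk_X, map_one, sub_eq_zero]
          exact hpow1
        obtain ⟨q, hq⟩ := hmdvd
        have hA1 : A ^ (orderOf (AdjoinRoot.root m)) = 1 := by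
          have h : aeval A (X ^ (orderOf (AdjoinRoot.root m)) - 1 : F[X]) = 0 := by
            rw [hq, map_mul, hm0, zero_mul]
          rwa [map_sub, map_pow, aeval_X, map_one, sub_eq_zero] at h
        rw [← hordA]
        exact orderOf_dvd_of_pow_eq_one hA1
      exact Nat.dvd_antisymm hdvd1 hdvd2
    have hdeg := aux_deg hp hr hcop m hm_monic hm_irr hroot
    refine ⟨Or.inl (by rw [hkm, hdeg]), ?_, by omega⟩
    rw [hkm, hdeg]
    exact hℓle
end
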